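/- arXiv:1808.06376 — 3 statements merged into one kernel-verified Lean document; each statement's English description precedes it below -/
import Mathlib

section
/- If G is a group, H ≤ G is a subgroup of finite index, and H is bounded (i.e., every conjugation-invariant norm on H has finite diameter), then G is bounded. More concretely: if ν is a conjugation-invariant norm on G whose restriction to H has finite diameter, then ν has finite diameter on G. -/
/-- A conjugation-invariant norm on a group `G`. -/
structure ConjInvNorm (G : Type*) [Group G] where
  ν : G → ℝ
  nonneg : ∀ g, 0 ≤ ν g
  eq_zero_iff : ∀ g, ν g = 0 ↔ g = 1
  inv_eq : ∀ g, ν g⁻¹ = ν g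
  subadd : ∀ g h, ν (g * h) ≤ ν g + ν h
  conj_inv : ∀ g h, ν (h⁻¹ * g * h) = ν g

/-- A group is bounded if every conjugation-invariant norm on it has finite diameter. -/
def IsBoundedGroup (G : Type*) [Group G] : Prop :=
  ∀ ν : ConjInvNorm G, ∃ C : ℝ, ∀ g, ν.ν g ≤ C

/-!
Every `g ∈ G` is `q * h` with `q` one of finitely many coset representatives and `h ∈ H`, so by
subadditivity `ν g` is at most the largest `ν q` plus the diameter of `ν` on `H`. Conjugation
invariance is only needed to make the restriction of `ν` to `H` a norm on `H`.
-/

namespace ConjInvNorm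

variable {G K : Type*} [Group G] [Group K]

def comap (ν : ConjInvNorm G) (f : K →* G) (hf : Function.Injective f) : ConjInvNorm K where
  ν k := ν.ν (f k)
  nonneg k := ν.nonneg (f k)
  eq_zero_iff k := by rw [ν.eq_zero_iff, ← f.map_one, hf.eq_iff]
  inv_eq k := by simp only [map_inv, ν.inv_eq]
  subadd k l := by simpa only [map_mul] using ν.subadd (f k) (f l)
  conj_inv k l := by simpa only [map_mul, map_inv] using ν.conj_inv (f k) (f l)

end ConjInvNorm

theorem Subgroup.bddAbove_range_of_bddAbove_image_of_subadditive {G M : Type*} [Group G]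
    [AddCommMonoid M] [LinearOrder M] [IsOrderedAddMonoid M] (H : Subgroup G) [H.FiniteIndex]
    {f : G → M} (hf : ∀ g h, f (g * h) ≤ f g + f h) (hH : BddAbove (f '' H)) :
    BddAbove (Set.range f) := by
  have : Finite (G ⧸ H) := H.finite_quotient_of_finiteIndex
  obtain ⟨B, hB⟩ := (Set.finite_range fun q : G ⧸ H => f q.out).bddAbove
  obtain ⟨C, hC⟩ := hH
  refine ⟨B + C, ?_⟩
  rintro _ ⟨g, rfl⟩
  obtain ⟨h, hh⟩ := QuotientGroup.mk_out_eq_mul H g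
  have hg : g = (g : G ⧸ H).out * (h : G)⁻¹ := by rw [hh, mul_inv_cancel_right]
  calc f g ≤ f (g : G ⧸ H).out + f (h : G)⁻¹ := (congrArg f hg).trans_le (hf _ _)
    _ ≤ B + C := add_le_add (hB ⟨_, rfl⟩) (hC ⟨_, inv_mem h.2, rfl⟩)

/-- A finite index subgroup being bounded implies the ambient group is bounded. -/
theorem bounded_of_finiteIndex_bounded (G : Type*) [Group G] (H : Subgroup G)
    [H.FiniteIndex] (hH : IsBoundedGroup H) : IsBoundedGroup G := by
  intro ν
  obtain ⟨C, hC⟩ := hH (ν.comap H.subtype H.subtype_injective)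
  have hνH : BddAbove (ν.ν '' H) := ⟨C, by rintro _ ⟨h, hh, rfl⟩; exact hC ⟨h, hh⟩⟩
  obtain ⟨B, hB⟩ := H.bddAbove_range_of_bddAbove_image_of_subadditive ν.subadd hνH
  exact ⟨B, fun g => hB ⟨g, rfl⟩⟩
end

section
/- The infinite dihedral group D∞ = ℤ ⋊ ℤ/2 (with ℤ/2 acting by negation) is bounded, even though it contains the unbounded infinite cyclic subgroup ℤ of index 2. In particular, for any conjugation-invariant norm ν on D∞, ν restricted to the translation subgroup ℤ is bounded (since every translation is a product of two reflections, whose conjugacy classes are finite in number up to the norm values of two fixed reflections). -/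
/-!
Every translation `r i` of `D∞` is the product `sr 0 * sr i` of two reflections, and the
reflections form just two conjugacy classes, those of `sr 0` and `sr 1`, since conjugating
`sr i` by a translation `r j` gives `sr (i ± 2 j)`. So every element is a product of at most
two elements conjugate to `sr 0` or `sr 1`, and any conjugation-invariant norm is bounded by
`2 (ν (sr 0) + ν (sr 1))`.
-/

namespace ConjInvNorm

variable {G : Type*} [Group G] (ν : ConjInvNorm G)

theorem map_one : ν.ν 1 = 0 :=
  (ν.eq_zero_iff 1).2 rfl

theorem eq_of_isConj {a b : G} (h : IsConj a b) : ν.ν a = ν.ν b := by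
  obtain ⟨c, rfl⟩ := isConj_iff.1 h
  simpa using (ν.conj_inv a c⁻¹).symm

theorem list_prod_le (l : List G) : ν.ν l.prod ≤ (l.map ν.ν).sum := by
  induction l with
  | nil => simp [ν.map_one]
  | cons g l ih =>
    simpa using (ν.subadd g l.prod).trans (add_le_add_right ih _)

theorem le_sum_of_isConj {S : Finset G} {g : G} (hg : ∃ s ∈ S, IsConj s g) :
    ν.ν g ≤ ∑ s ∈ S, ν.ν s := by
  obtain ⟨s, hs, hsg⟩ := hg
  rw [← ν.eq_of_isConj hsg]
  exact Finset.single_le_sum (fun t _ ↦ ν.nonneg t) hs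

end ConjInvNorm

theorem isBoundedGroup_of_forall_eq_prod_conj {G : Type*} [Group G] (S : Finset G) (n : ℕ)
    (h : ∀ g : G, ∃ l : List G, l.length ≤ n ∧ (∀ x ∈ l, ∃ s ∈ S, IsConj s x) ∧ l.prod = g) :
    IsBoundedGroup G := by
  intro ν
  refine ⟨n * ∑ s ∈ S, ν.ν s, fun g ↦ ?_⟩
  obtain ⟨l, hlen, hconj, rfl⟩ := h g
  have hsum_nonneg : 0 ≤ ∑ s ∈ S, ν.ν s := Finset.sum_nonneg fun s _ ↦ ν.nonneg s
  calc ν.ν l.prod ≤ (l.map ν.ν).sum := ν.list_prod_le l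
    _ ≤ l.length • ∑ s ∈ S, ν.ν s := by
      simpa using List.sum_le_card_nsmul (l.map ν.ν) _ (by
        simpa using fun x hx ↦ ν.le_sum_of_isConj (hconj x hx))
    _ ≤ n * ∑ s ∈ S, ν.ν s := by
      rw [nsmul_eq_mul]
      exact mul_le_mul_of_nonneg_right (by exact_mod_cast hlen) hsum_nonneg

namespace DihedralGroup

variable {n : ℕ}

theorem isConj_sr_sr_add_two_mul (i j : ZMod n) : IsConj (sr i) (sr (i + 2 * j)) :=
  isConj_iff.2 ⟨r (-j), by simp only [r_mul_sr, sr_mul_r, inv_r]; ring_nf⟩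

theorem isConj_sr_zero_or_isConj_sr_one (i : ZMod n) :
    IsConj (sr 0) (sr i) ∨ IsConj (sr 1) (sr i) := by
  obtain ⟨k, rfl⟩ : ∃ k : ℤ, (k : ZMod n) = i := ⟨i.cast, ZMod.intCast_zmod_cast i⟩
  have hk : (k : ZMod n) = ((k % 2 : ℤ) : ZMod n) + 2 * ((k / 2 : ℤ) : ZMod n) := by
    exact_mod_cast congrArg (Int.cast (R := ZMod n)) (Int.emod_add_mul_ediv k 2).symm
  rw [hk]
  rcases Int.emod_two_eq_zero_or_one k with h | h <;> rw [h]
  · exact .inl (Int.cast_zero (R := ZMod n) ▸ isConj_sr_sr_add_two_mul _ _)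
  · exact .inr (Int.cast_one (R := ZMod n) ▸ isConj_sr_sr_add_two_mul _ _)

theorem r_eq_sr_zero_mul_sr (i : ZMod n) : r i = sr 0 * sr i := by
  rw [sr_mul_sr, sub_zero]

theorem isBoundedGroup : IsBoundedGroup (DihedralGroup n) := by
  refine isBoundedGroup_of_forall_eq_prod_conj {sr 0, sr 1} 2 fun g ↦ ?_
  have hrefl : ∀ i : ZMod n, ∃ s ∈ ({sr 0, sr 1} : Finset (DihedralGroup n)), IsConj s (sr i) :=
    fun i ↦ (isConj_sr_zero_or_isConj_sr_one i).elim (⟨_, by simp, ·⟩) (⟨_, by simp, ·⟩)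
  rcases g with i | i
  · refine ⟨[sr 0, sr i], le_rfl, ?_, by rw [r_eq_sr_zero_mul_sr, List.prod_pair]⟩
    intro x hx
    obtain rfl | rfl := List.mem_pair.1 hx <;> exact hrefl _
  · exact ⟨[sr i], by simp, List.forall_mem_singleton.2 (hrefl i), List.prod_singleton⟩

end DihedralGroup

/-- The infinite dihedral group (ℤ ⋊ ℤ/2, realized as `DihedralGroup 0`) is bounded. -/
theorem infinite_dihedral_bounded : IsBoundedGroup (DihedralGroup 0) :=
  DihedralGroup.isBoundedGroup
end

section
/- Let G be a group generated by subgroups E₁, ..., Eₖ with the property that there is m ∈ ℕ such that every g ∈ G is a product of at most m elements each lying in some Eᵢ (bounded generation). Let H ≤ G be a finite index normal subgroup and ν a conjugation-invariant norm on H. If the set {g e g⁻¹ : g ∈ G, e ∈ Eᵢ for some i} ∩ H is bounded with respect to ν, and each H ∩ Eᵢ has finite index in Eᵢ, then ν has finite diameter on H. -/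
/-- Bounded generation by subgroups whose conjugates meet `H` boundedly implies the
norm has finite diameter on the finite index normal subgroup `H`. -/
theorem bounded_of_bounded_generation {G : Type*} [Group G] {k : ℕ}
    (E : Fin k → Subgroup G) (m : ℕ)
    (hgen : ∀ g : G, ∃ l : List G, l.length ≤ m ∧
      (∀ x ∈ l, ∃ i, x ∈ E i) ∧ l.prod = g)
    (H : Subgroup G) (hN : H.Normal) [H.FiniteIndex]
    (ν : ConjInvNorm H)
    (hconjbdd : ∃ C : ℝ, ∀ g e : G, ∀ i : Fin k, e ∈ E i →
      ∀ hm : g * e * g⁻¹ ∈ H, ν.ν ⟨g * e * g⁻¹, hm⟩ ≤ C)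
    (hfin : ∀ i, (H.subgroupOf (E i)).FiniteIndex) :
    ∃ C : ℝ, ∀ h : H, ν.ν h ≤ C := by
  obtain ⟨C, hC⟩ := hconjbdd
  -- replace C by max C 0 to ensure nonnegativity
  set C₀ : ℝ := max C 0 with hC₀def
  have hC₀nonneg : 0 ≤ C₀ := le_max_right _ _
  have hC₀ : ∀ g e : G, ∀ i : Fin k, e ∈ E i →
      ∀ hm : g * e * g⁻¹ ∈ H, ν.ν ⟨g * e * g⁻¹, hm⟩ ≤ C₀ := by
    intro g e i he hm
    exact le_trans (hC g e i he hm) (le_max_left _ _)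
  haveI : ∀ i, Finite ((E i) ⧸ H.subgroupOf (E i)) := by
    intro i
    haveI := hfin i
    infer_instance
  -- the set of coset representatives
  set R : Set G := ⋃ i : Fin k,
      Set.range (fun q : (E i) ⧸ H.subgroupOf (E i) => ((Quotient.out q : E i) : G)) with hRdef
  have hRfin : R.Finite := Set.finite_iUnion (fun i => Set.finite_range _)
  -- sets of products of length ≤ n of elements of R
  let P : ℕ → Set G := fun n => Nat.rec {1} (fun _ Pn => Pn ∪ Set.image2 (· * ·) R Pn) n
  have hPfin : ∀ n, (P n).Finite := by
    intro n
    induction n with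
    | zero => exact Set.finite_singleton 1
    | succ n ih => exact ih.union (Set.Finite.image2 _ hRfin ih)
  have hPone : ∀ n, (1 : G) ∈ P n := by
    intro n
    induction n with
    | zero => exact rfl
    | succ n ih => exact Or.inl ih
  have hPprod : ∀ n (l : List G), l.length ≤ n → (∀ x ∈ l, x ∈ R) → l.prod ∈ P n := by
    intro n
    induction n with
    | zero =>
      intro l hl _
      rw [Nat.le_zero, List.length_eq_zero_iff] at hl
      subst hl
      exact hPone 0
    | succ n ih =>
      intro l hl hmem
      match l with
      | [] => exact hPone (n + 1)
      | x :: l' =>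
        simp only [List.length_cons, Nat.succ_le_succ_iff] at hl
        have hx : x ∈ R := hmem x List.mem_cons_self
        have hl' : l'.prod ∈ P n := ih l' hl (fun y hy => hmem y (List.mem_cons_of_mem x hy))
        exact Or.inr ⟨x, hx, l'.prod, hl', rfl⟩
  -- bound of ν on elements of (P m) ∩ H
  obtain ⟨C', hC'⟩ : ∃ C' : ℝ, ∀ x (hx : x ∈ P m) (hxH : x ∈ H), ν.ν ⟨x, hxH⟩ ≤ C' := by
    classical
    set f : G → ℝ := fun x => if hx : x ∈ H then ν.ν ⟨x, hx⟩ else 0 with hfdef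
    have hfin' : (f '' P m).Finite := ((hPfin m).image f)
    obtain ⟨C', hC'⟩ := hfin'.bddAbove
    refine ⟨C', fun x hx hxH => ?_⟩
    have : f x = ν.ν ⟨x, hxH⟩ := dif_pos hxH
    rw [← this]
    exact hC' ⟨x, hx, rfl⟩
  -- main decomposition lemma
  have main : ∀ l : List G,
      (∀ x ∈ l, ∃ t ∈ R, ∃ y : G, ∃ hy : y ∈ H, x = t * y ∧
        ∀ g : G, ∀ hyg : g⁻¹ * y * g ∈ H, ν.ν ⟨g⁻¹ * y * g, hyg⟩ ≤ C₀) →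
      ∃ lt : List G, lt.length = l.length ∧ (∀ t ∈ lt, t ∈ R) ∧
        ∃ z : H, l.prod = lt.prod * (z : G) ∧ ν.ν z ≤ l.length * C₀ := by
    intro l
    induction l with
    | nil =>
      intro _
      refine ⟨[], rfl, by simp, 1, by simp, by simpa using le_of_eq ((ν.eq_zero_iff 1).2 rfl)⟩
    | cons x l' ih =>
      intro hmem
      obtain ⟨t, ht, y, hy, hxty, hybdd⟩ := hmem x List.mem_cons_self
      obtain ⟨lt', hlen', hltR', z', hprod', hz'⟩ :=
        ih (fun u hu => hmem u (List.mem_cons_of_mem x hu))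
      set w := lt'.prod with hwdef
      have hy' : w⁻¹ * y * w ∈ H := by
        have := hN.conj_mem y hy w⁻¹
        simpa using this
      set y' : H := ⟨w⁻¹ * y * w, hy'⟩ with hy'def
      refine ⟨t :: lt', by simp [hlen'], ?_, y' * z', ?_, ?_⟩
      · intro u hu
        rcases List.mem_cons.1 hu with h | h
        · exact h ▸ ht
        · exact hltR' u h
      · have : (x :: l').prod = x * l'.prod := List.prod_cons
        rw [this, hxty, hprod', List.prod_cons]
        push_cast [hy'def]
        rw [← hwdef]
        group
      · have hb1 : ν.ν y' ≤ C₀ := hybdd w hy'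
        have hb2 := ν.subadd y' z'
        have : ν.ν (y' * z') ≤ C₀ + l'.length * C₀ := le_trans hb2 (by linarith)
        calc ν.ν (y' * z') ≤ C₀ + l'.length * C₀ := this
          _ = (x :: l').length * C₀ := by
              simp only [List.length_cons]
              push_cast
              ring
  refine ⟨C' + m * C₀, ?_⟩
  intro h
  obtain ⟨l, hlen, hmem, hprod⟩ := hgen (h : G)
  have hdec : ∀ x ∈ l, ∃ t ∈ R, ∃ y : G, ∃ hy : y ∈ H, x = t * y ∧
      ∀ g : G, ∀ hyg : g⁻¹ * y * g ∈ H, ν.ν ⟨g⁻¹ * y * g, hyg⟩ ≤ C₀ := by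
    intro x hx
    obtain ⟨i, hxi⟩ := hmem x hx
    set q : (E i) ⧸ H.subgroupOf (E i) := QuotientGroup.mk (⟨x, hxi⟩ : E i) with hqdef
    set t : E i := Quotient.out q with htdef
    have hmk : QuotientGroup.mk t = q := QuotientGroup.out_eq' q
    have hrel : (t : E i)⁻¹ * ⟨x, hxi⟩ ∈ H.subgroupOf (E i) := by
      rw [hqdef] at hmk
      exact QuotientGroup.eq.1 hmk
    have hyH : (t : G)⁻¹ * x ∈ H := hrel
    have hyE : (t : G)⁻¹ * x ∈ E i := (E i).mul_mem (by exact (E i).inv_mem t.2) hxi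
    refine ⟨(t : G), ?_, (t : G)⁻¹ * x, hyH, by group, ?_⟩
    · exact Set.mem_iUnion.2 ⟨i, ⟨q, rfl⟩⟩
    · intro g hyg
      have := hC₀ g⁻¹ ((t : G)⁻¹ * x) i hyE (by simpa using hyg)
      convert this using 2
      group
  obtain ⟨lt, hltlen, hltR, z, hzprod, hzbdd⟩ := main l hdec
  have hltH : lt.prod ∈ H := by
    have : lt.prod = (h : G) * (z : G)⁻¹ := by
      rw [hprod] at hzprod
      rw [hzprod]; group
    rw [this]
    exact H.mul_mem h.2 (H.inv_mem z.2)
  have hltP : lt.prod ∈ P m := hPprod m lt (hltlen ▸ hlen) hltR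
  have hsplit : h = (⟨lt.prod, hltH⟩ : H) * z := by
    apply Subtype.ext
    push_cast
    rw [← hprod, hzprod]
  calc ν.ν h = ν.ν ((⟨lt.prod, hltH⟩ : H) * z) := by rw [← hsplit]
    _ ≤ ν.ν (⟨lt.prod, hltH⟩ : H) + ν.ν z := ν.subadd _ _
    _ ≤ C' + m * C₀ := by
        have h1 := hC' lt.prod hltP hltH
        have h2 : (l.length : ℝ) * C₀ ≤ m * C₀ := by
          apply mul_le_mul_of_nonneg_right _ hC₀nonneg
          exact_mod_cast hlen
        linarith
end
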